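/- For every m ≥ 1, let H be the disjoint union of G_m and a single edge K_2 with vertices b' and c'. Then the graph Sub(H; b_m, c') is isomorphic to G_{m+1}. -/

import Mathlib

/-- The vertex set of the graph `Gₘ`: `Sum.inl i` is the vertex `a_{i+1}` (for `0 ≤ i < m`),
`Sum.inr (Sum.inl i)` is `b_{i+1}`, and `Sum.inr (Sum.inr j)` is `c_{j+2}`. -/
abbrev GV (m : ℕ) := Fin m ⊕ Fin m ⊕ Fin (m - 1)

/-- The vertex `a_{i+1}` of `Gₘ`. -/
def aV {m : ℕ} (i : Fin m) : GV m := Sum.inl i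
/-- The vertex `b_{i+1}` of `Gₘ`. -/
def bV {m : ℕ} (i : Fin m) : GV m := Sum.inr (Sum.inl i)
/-- The vertex `c_{j+2}` of `Gₘ`. -/
def cV {m : ℕ} (j : Fin (m - 1)) : GV m := Sum.inr (Sum.inr j)

/-- Half of the adjacency relation of `Gₘ` (the full relation is its symmetrization):
the edges `a_i a_{i+1}`, `a_i b_i`, `b_i c_{i+1}`, `b_i c_i`, `c_i a_{i+1}` (1-based indices). -/
def adjHalf (m : ℕ) : GV m → GV m → Bool
  | Sum.inl i, Sum.inl j => decide (i.val + 1 = j.val)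
  | Sum.inl i, Sum.inr (Sum.inl j) => decide (i = j)
  | Sum.inl _, Sum.inr (Sum.inr _) => false
  | Sum.inr (Sum.inl _), Sum.inl _ => false
  | Sum.inr (Sum.inl _), Sum.inr (Sum.inl _) => false
  | Sum.inr (Sum.inl i), Sum.inr (Sum.inr j) => decide (i.val = j.val ∨ i.val = j.val + 1)
  | Sum.inr (Sum.inr j), Sum.inl i => decide (i.val = j.val + 2)
  | Sum.inr (Sum.inr _), Sum.inr (Sum.inl _) => false
  | Sum.inr (Sum.inr _), Sum.inr (Sum.inr _) => false

/-- The graph `Gₘ` from the paper (with `3m - 1` vertices). -/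
def Gm (m : ℕ) : SimpleGraph (GV m) where
  Adj u v := adjHalf m u v = true ∨ adjHalf m v u = true
  symm := ⟨fun _ _ h => h.symm⟩
  loopless := by
    constructor
    rintro (i | i | j) h <;> simp [adjHalf] at h

instance (m : ℕ) : DecidableRel (Gm m).Adj := fun u v =>
  inferInstanceAs (Decidable (adjHalf m u v = true ∨ adjHalf m v u = true))

/-- The graph `Sub(G; x, y)` obtained from `G` by adding the edge `xy` together with a new
vertex `a = Sum.inr ()` joined to every neighbor of `x` or `y`. -/
def SubG {V : Type*} (G : SimpleGraph V) (x y : V) (hxy : x ≠ y) :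
    SimpleGraph (V ⊕ Unit) where
  Adj u v :=
    match u, v with
    | Sum.inl u, Sum.inl v => G.Adj u v ∨ (u = x ∧ v = y) ∨ (u = y ∧ v = x)
    | Sum.inl u, Sum.inr _ => G.Adj u x ∨ G.Adj u y
    | Sum.inr _, Sum.inl v => G.Adj v x ∨ G.Adj v y
    | Sum.inr _, Sum.inr _ => False
  symm := by
    constructor
    rintro (u | u) (v | v) h
    · rcases h with h | ⟨h1, h2⟩ | ⟨h1, h2⟩
      · exact Or.inl h.symm
      · exact Or.inr (Or.inr ⟨h2, h1⟩)
      · exact Or.inr (Or.inl ⟨h2, h1⟩)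
    · exact h
    · exact h
    · exact h
  loopless := by
    constructor
    rintro (u | u) h
    · rcases h with h | ⟨h1, h2⟩ | ⟨h1, h2⟩
      · exact G.irrefl h
      · exact hxy (h1.symm.trans h2)
      · exact hxy (h2.symm.trans h1)
    · exact h

/-- The disjoint union of two simple graphs. -/
def DisjUnion {α β : Type*} (G : SimpleGraph α) (H : SimpleGraph β) :
    SimpleGraph (α ⊕ β) where
  Adj u v :=
    match u, v with
    | Sum.inl a, Sum.inl b => G.Adj a b
    | Sum.inr a, Sum.inr b => H.Adj a b
    | _, _ => False
  symm := by
    constructor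
    rintro (a | a) (b | b) h
    · exact G.adj_symm h
    · exact h.elim
    · exact h.elim
    · exact H.adj_symm h
  loopless := by
    constructor
    rintro (a | a) h
    · exact G.irrefl h
    · exact H.irrefl h

def fwd (m : ℕ) (hm : 1 ≤ m) : (GV m ⊕ Fin 2) ⊕ Unit → GV (m+1)
  | .inl (.inl (.inl i)) => .inl (Fin.castSucc i)
  | .inl (.inl (.inr (.inl i))) => .inr (.inl (Fin.castSucc i))
  | .inl (.inl (.inr (.inr j))) => .inr (.inr (Fin.castLE (Nat.sub_le m 1) j))
  | .inl (.inr ⟨0, _⟩) => .inr (.inl ⟨m, by omega⟩)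
  | .inl (.inr ⟨_+1, _⟩) => .inr (.inr ⟨m-1, by omega⟩)
  | .inr _ => .inl ⟨m, by omega⟩

def bwd (m : ℕ) : GV (m+1) → (GV m ⊕ Fin 2) ⊕ Unit
  | .inl i => if h : i.val < m then .inl (.inl (.inl ⟨i.val, h⟩)) else .inr ()
  | .inr (.inl i) => if h : i.val < m then .inl (.inl (.inr (.inl ⟨i.val, h⟩))) else .inl (.inr 0)
  | .inr (.inr j) => if h : j.val < m - 1 then .inl (.inl (.inr (.inr ⟨j.val, h⟩))) else .inl (.inr 1)

@[simp] lemma fwd_a (m : ℕ) (hm : 1 ≤ m) (i : Fin m) :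
    fwd m hm (.inl (.inl (.inl i))) = .inl i.castSucc := rfl
@[simp] lemma fwd_b (m : ℕ) (hm : 1 ≤ m) (i : Fin m) :
    fwd m hm (.inl (.inl (.inr (.inl i)))) = .inr (.inl i.castSucc) := rfl
@[simp] lemma fwd_c (m : ℕ) (hm : 1 ≤ m) (j : Fin (m-1)) :
    fwd m hm (.inl (.inl (.inr (.inr j)))) = .inr (.inr (Fin.castLE (Nat.sub_le m 1) j)) := rfl
@[simp] lemma fwd_b' (m : ℕ) (hm : 1 ≤ m) :
    fwd m hm (.inl (.inr 0)) = .inr (.inl ⟨m, by omega⟩) := rfl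
@[simp] lemma fwd_c' (m : ℕ) (hm : 1 ≤ m) :
    fwd m hm (.inl (.inr 1)) = .inr (.inr ⟨m-1, by omega⟩) := rfl
@[simp] lemma fwd_new (m : ℕ) (hm : 1 ≤ m) (u : Unit) :
    fwd m hm (.inr u) = .inl ⟨m, by omega⟩ := rfl
@[simp] lemma Gm_adj (m : ℕ) (u v : GV m) :
    (Gm m).Adj u v ↔ (adjHalf m u v = true ∨ adjHalf m v u = true) := Iff.rfl

set_option maxHeartbeats 1000000 in
/-- Subdividing (in the sense of the `Sub` construction) the disjoint union of `Gₘ` and a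
single edge `K₂` (with vertices `b' = Sum.inr 0` and `c' = Sum.inr 1`) at the pair
`(b_m, c')` produces a graph isomorphic to `G_{m+1}`. -/
theorem subG_Gm_disjUnion_K2 (m : ℕ) (hm : 1 ≤ m) :
    Nonempty
      ((SubG (DisjUnion (Gm m) (⊤ : SimpleGraph (Fin 2)))
          (Sum.inl (bV ⟨m - 1, by omega⟩)) (Sum.inr 1) (by simp)) ≃g Gm (m + 1)) := by
  refine ⟨⟨⟨fwd m hm, bwd m, ?_, ?_⟩, ?_⟩⟩
  · rintro (((i|i|j)|⟨k,hk⟩)|⟨⟩)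
    case refine_1.inl.inr => interval_cases k <;> simp [fwd, bwd]
    all_goals simp [fwd, bwd]
  · rintro (i|i|j) <;> simp only [bwd] <;> split_ifs with h <;>
      simp [fwd, Fin.ext_iff] <;> omega
  · rintro (((i|i|j)|⟨k,hk⟩)|⟨⟩) (((i'|i'|j')|⟨k',hk'⟩)|⟨⟩)
    all_goals try interval_cases k
    all_goals try interval_cases k'
    all_goals (simp [Gm, SubG, DisjUnion, adjHalf, aV, bV, cV, Fin.ext_iff])
    all_goals omega
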